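/- arXiv:1807.06465 — 4 statements merged into one kernel-verified Lean document; each statement's English description precedes it below -/
import Mathlib

section
/- Let d ≥ 3 be an integer, p a prime, n a positive integer, and fix v ∈ F_p^n with Φ(v) = (n_0, n_1, …, n_{p−1}) (so #{k : v_k = j} = n_j for each j). Then the number of permutations P of [n]×[d] with A(P)·v = 0 over F_p equals (∏_{j=0}^{p−1} (d·n_j)!) times the number of n-tuples (a¹, …, aⁿ) ∈ (Z_{d,p})^n such that for every j ∈ {0,…,p−1}, Σ_{k=1}^n Φ(aᵏ)(j) = d·n_j. -/
open Finset

/-- Adjacency matrix of the directed configuration model. -/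
def adjMat (n d : ℕ) (P : Equiv.Perm (Fin n × Fin d)) : Matrix (Fin n) (Fin n) ℤ :=
  fun k l => ((Finset.univ.filter (fun i : Fin d => (P (k, i)).1 = l)).card : ℤ)

/-- The counting map `Φ` : the `j`-th coordinate of `Φ(a)` is `#{r : a r = j}`. -/
def Phi {d p : ℕ} (a : Fin d → ZMod p) (j : ZMod p) : ℕ :=
  (Finset.univ.filter (fun r : Fin d => a r = j)).card

/-- `Φ` applied to a vector `v ∈ 𝔽_p^n` coordinate-countwise: `#{k : v k = j}`. -/
def countv {n p : ℕ} (v : Fin n → ZMod p) (j : ZMod p) : ℕ :=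
  (Finset.univ.filter (fun k : Fin n => v k = j)).card

def permRestrictEquiv {X J : Type*} (g h : X → J) :
    {P : Equiv.Perm X // ∀ x, g (P x) = h x} ≃ ∀ j, ({x // h x = j} ≃ {x // g x = j}) where
  toFun P j :=
    { toFun := fun x => ⟨P.1 x.1, by rw [P.2]; exact x.2⟩
      invFun := fun y => ⟨P.1.symm y.1, by
        have h1 := P.2 (P.1.symm y.1)
        rw [Equiv.apply_symm_apply] at h1
        rw [← h1]; exact y.2⟩
      left_inv := fun x => Subtype.ext (P.1.symm_apply_apply x.1)
      right_inv := fun y => Subtype.ext (P.1.apply_symm_apply y.1) }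
  invFun F := ⟨(Equiv.sigmaFiberEquiv h).symm.trans
      ((Equiv.sigmaCongrRight F).trans (Equiv.sigmaFiberEquiv g)), fun x =>
      (F (h x) ⟨x, rfl⟩).2⟩
  left_inv P := Subtype.ext (Equiv.ext fun x => rfl)
  right_inv F := by
    funext j
    ext x
    obtain ⟨x, hx⟩ := x
    subst hx
    rfl

lemma card_perm_fiber {X J : Type*} [Fintype X] [DecidableEq X] [Fintype J] [DecidableEq J]
    (g h : X → J) (hcard : ∀ j, Fintype.card {x // h x = j} = Fintype.card {x // g x = j}) :
    Fintype.card {P : Equiv.Perm X // ∀ x, g (P x) = h x}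
      = ∏ j, (Fintype.card {x // g x = j}).factorial := by
  rw [Fintype.card_congr (permRestrictEquiv g h), Fintype.card_pi]
  refine Finset.prod_congr rfl fun j _ => ?_
  rw [Fintype.card_equiv (Fintype.equivOfCardEq (hcard j)), hcard j]

/-- Random walk representation (directed case): for fixed `v ∈ 𝔽_p^n` with
`Φ(v) = (n_0, …, n_{p-1})`, the number of permutations `P` of `[n]×[d]` with `A(P) v = 0`
over `𝔽_p` equals `(∏_j (d n_j)!)` times the number of `n`-tuples of elements of `Z_{d,p}`
whose counting vectors sum to `(d n_0, …, d n_{p-1})`. -/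
theorem directed_walk_representation (d : ℕ) (hd : 3 ≤ d) (p : ℕ) [Fact p.Prime]
    (n : ℕ) (hn : 0 < n) (v : Fin n → ZMod p) :
    (Finset.univ.filter (fun P : Equiv.Perm (Fin n × Fin d) =>
        Matrix.mulVec ((adjMat n d P).map (Int.cast : ℤ → ZMod p)) v = 0)).card
      = (∏ j : ZMod p, (d * countv v j).factorial) *
        (Finset.univ.filter (fun a : Fin n → Fin d → ZMod p =>
          (∀ k, ∑ i, a k i = 0) ∧
          (∀ j : ZMod p, (∑ k, Phi (a k) j) = d * countv v j))).card := by
  classical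
  set f : Equiv.Perm (Fin n × Fin d) → (Fin n → Fin d → ZMod p) :=
    fun P k i => v ((P (k, i)).1) with hf
  -- products split as sums over the first coordinate
  have hsum : ∀ (w : Fin n × Fin d → ZMod p) (j : ZMod p),
      (univ.filter fun x => w x = j).card
        = ∑ k : Fin n, (univ.filter fun i : Fin d => w (k, i) = j).card := by
    intro w j
    rw [Finset.card_filter, Fintype.sum_prod_type]
    exact Finset.sum_congr rfl fun k _ => (Finset.card_filter _ _).symm
  -- count of pairs with v of first coordinate equal to j
  have hcv : ∀ j : ZMod p,
      (univ.filter fun x : Fin n × Fin d => v x.1 = j).card = d * countv v j := by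
    intro j
    rw [hsum (fun x => v x.1) j, countv, Finset.card_filter, Finset.mul_sum]
    refine Finset.sum_congr rfl fun k _ => ?_
    by_cases h : v k = j <;> simp [Finset.filter_const, h]
  -- permutation invariance of fiber counts
  have hperm : ∀ (P : Equiv.Perm (Fin n × Fin d)) (j : ZMod p),
      (univ.filter fun x : Fin n × Fin d => v ((P x).1) = j).card
        = (univ.filter fun x : Fin n × Fin d => v x.1 = j).card := by
    intro P j
    apply Finset.card_bij (fun x _ => P x)
    · intro a ha; simp only [mem_filter, mem_univ, true_and] at ha ⊢; exact ha
    · intro a _ b _ hab; exact P.injective hab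
    · intro b hb
      refine ⟨P.symm b, ?_, P.apply_symm_apply b⟩
      simp only [mem_filter, mem_univ, true_and] at hb ⊢
      rw [P.apply_symm_apply]; exact hb
  -- mulVec entries
  have hmv : ∀ (P : Equiv.Perm (Fin n × Fin d)) (k : Fin n),
      Matrix.mulVec ((adjMat n d P).map (Int.cast : ℤ → ZMod p)) v k
        = ∑ i : Fin d, v ((P (k, i)).1) := by
    intro P k
    rw [Matrix.mulVec, dotProduct,
      ← Finset.sum_fiberwise univ (fun i : Fin d => (P (k, i)).1)
        (fun i => v ((P (k, i)).1))]
    refine Finset.sum_congr rfl fun l _ => ?_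
    rw [Finset.sum_congr rfl (fun i hi => by rw [(Finset.mem_filter.mp hi).2] :
      ∀ i ∈ univ.filter (fun i : Fin d => (P (k, i)).1 = l), v ((P (k, i)).1) = v l)]
    rw [Finset.sum_const, nsmul_eq_mul]
    simp [adjMat, Matrix.map_apply]
  set T := univ.filter (fun a : Fin n → Fin d → ZMod p =>
          (∀ k, ∑ i, a k i = 0) ∧
          (∀ j : ZMod p, (∑ k, Phi (a k) j) = d * countv v j)) with hT
  set S := univ.filter (fun P : Equiv.Perm (Fin n × Fin d) =>
        Matrix.mulVec ((adjMat n d P).map (Int.cast : ℤ → ZMod p)) v = 0) with hS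
  have hmaps : ∀ P ∈ S, f P ∈ T := by
    intro P hP
    rw [hS, mem_filter] at hP
    rw [hT, mem_filter]
    refine ⟨mem_univ _, fun k => ?_, fun j => ?_⟩
    · have h2 := congrFun hP.2 k
      rw [hmv P k] at h2
      exact h2
    · have : ∀ k : Fin n, Phi (f P k) j
          = (univ.filter fun i : Fin d => v ((P (k, i)).1) = j).card := fun k => rfl
      rw [Finset.sum_congr rfl (fun k _ => this k),
        ← hsum (fun x => v ((P x).1)) j, hperm P j, hcv j]
  rw [Finset.card_eq_sum_card_fiberwise hmaps]
  have hfib : ∀ a ∈ T, (S.filter fun P => f P = a).card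
      = ∏ j : ZMod p, (d * countv v j).factorial := by
    intro a ha
    rw [hT, mem_filter] at ha
    have heq : (S.filter fun P => f P = a)
        = univ.filter (fun P : Equiv.Perm (Fin n × Fin d) =>
            ∀ x : Fin n × Fin d, v ((P x).1) = a x.1 x.2) := by
      ext P
      simp only [hS, mem_filter, mem_univ, true_and]
      constructor
      · rintro ⟨-, hPa⟩ x
        rw [← hPa]
      · intro hP
        constructor
        · funext k
          rw [hmv P k, Finset.sum_congr rfl (fun i _ => hP (k, i))]
          exact ha.2.1 k
        · funext k i
          exact hP (k, i)
    rw [heq, ← Fintype.card_subtype]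
    have := card_perm_fiber (fun x : Fin n × Fin d => v x.1)
      (fun x : Fin n × Fin d => a x.1 x.2) (fun j => ?_)
    · rw [this]
      refine Finset.prod_congr rfl fun j _ => ?_
      rw [Fintype.card_subtype, hcv j]
    · rw [Fintype.card_subtype, Fintype.card_subtype,
        hsum (fun x => a x.1 x.2) j, hcv j]
      exact ha.2.2 j
  rw [Finset.sum_congr rfl hfib, Finset.sum_const, smul_eq_mul, mul_comm]
end

section
/- Let d ≥ 3 be a fixed integer. There exists δ₀ > 0 such that for every δ ∈ (0, δ₀) there exists a constant c(δ) > 0 with the following property: for every prime p and every t ∈ ℝ^p such that for all j ∈ {0,1,…,p−1} and all m ∈ ℤ^p, the squared Euclidean norm of the orthogonal projection of t − 2πj·(0, 1/p, 2/p, …, (p−1)/p) − 2πm onto the hyperplane orthogonal to the all-ones vector (1,1,…,1) is strictly greater than δ, one has | p^{−(d−1)} Σ_{a ∈ Z_{d,p}} exp(i·⟨t, Φ(a)⟩) | ≤ 1 − c(δ)/p³. -/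
open Finset

/-!
Expressing the constraint `∑ r, a r = 0` through the additive characters of `ZMod p` turns the
sum into `p⁻¹ ∑ⱼ Gⱼ ^ d` with `G = 𝓕 (fun k => exp (t k * I))`, and Parseval gives
`∑ⱼ ‖Gⱼ‖² = p²`, so the sum has norm at most `p * (maxⱼ ‖Gⱼ‖) ^ (d - 2)`. Rotating `Gⱼ` by its
argument `θ` gives `‖Gⱼ‖ = ∑ₖ cos (uₖ - θ)` with `uₖ = t k - 2πjk/p`. Reduce each `uₖ - θ`
modulo `2π` to some `xₖ ∈ [-π, π]`; since the mean minimises the sum of squared deviations, the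
hypothesis gives `∑ₖ xₖ² > δ`, and `cos x ≤ 1 - 2x²/π²` on `[-π, π]` turns this into
`‖Gⱼ‖ ≤ p - 2δ/π²`. Hence the normalised sum is at most
`(1 - 2δ/(π²p)) ^ (d - 2) ≤ 1 - (2δ/π²)/p³`.
-/

open Complex ComplexConjugate
open scoped Real ZMod

lemma AddChar.map_sum_eq_prod {ι A M : Type*} [AddCommMonoid A] [CommMonoid M] (ψ : AddChar A M)
    (s : Finset ι) (f : ι → A) : ψ (∑ i ∈ s, f i) = ∏ i ∈ s, ψ (f i) := by
  have := map_prod ψ.toMonoidHom (fun i => Multiplicative.ofAdd (f i)) s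
  rwa [← ofAdd_sum] at this

lemma norm_sum_pow_le {ι 𝕜 : Type*} [NormedDivisionRing 𝕜] (s : Finset ι) (z : ι → 𝕜) {d : ℕ}
    (hd : 2 ≤ d) {B : ℝ} (hB : ∀ j ∈ s, ‖z j‖ ≤ B) :
    ‖∑ j ∈ s, z j ^ d‖ ≤ B ^ (d - 2) * ∑ j ∈ s, ‖z j‖ ^ 2 := by
  rw [mul_sum]
  refine (norm_sum_le _ _).trans (sum_le_sum fun j hj => ?_)
  rw [norm_pow, ← Nat.sub_add_cancel hd, pow_add, Nat.add_sub_cancel]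
  gcongr
  exact hB j hj

namespace ZMod

variable {N : ℕ} [NeZero N]

lemma sum_stdAddChar_neg_mul (x : ZMod N) :
    ∑ j : ZMod N, stdAddChar (-(j * x)) = if x = 0 then (N : ℂ) else 0 := by
  simp_rw [← mul_neg, AddChar.sum_mulShift _ (isPrimitive_stdAddChar N), neg_eq_zero, ZMod.card]
  split_ifs <;> simp

theorem sum_prod_eq_sum_dft_pow (d : ℕ) (f : ZMod N → ℂ) :
    ∑ a ∈ univ.filter (fun a : Fin d → ZMod N => ∑ r, a r = 0), ∏ r, f (a r) =
      (N : ℂ)⁻¹ * ∑ j, 𝓕 f j ^ d := by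
  have expand (j : ZMod N) : 𝓕 f j ^ d =
      ∑ a : Fin d → ZMod N, stdAddChar (-(j * ∑ r, a r)) * ∏ r, f (a r) := by
    rw [dft_apply, Fintype.sum_pow]
    refine sum_congr rfl fun a _ => ?_
    simp only [smul_eq_mul, prod_mul_distrib, mul_sum, ← sum_neg_distrib,
      AddChar.map_sum_eq_prod, mul_comm]
  simp_rw [expand]
  rw [sum_comm]
  simp_rw [← sum_mul, sum_stdAddChar_neg_mul, ite_mul, zero_mul, sum_ite, sum_const_zero,
    add_zero, mul_sum, inv_mul_cancel_left₀ (NeZero.ne (N : ℂ))]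

theorem sum_norm_dft_sq (f : ZMod N → ℂ) :
    ∑ j, ‖𝓕 f j‖ ^ 2 = N * ∑ k, ‖f k‖ ^ 2 := by
  have expand (j : ZMod N) : ((‖𝓕 f j‖ ^ 2 : ℝ) : ℂ) =
      ∑ k, ∑ l, stdAddChar (-(j * (k - l))) * (f k * conj (f l)) := by
    rw [ofReal_pow, ← mul_conj', dft_apply, map_sum, sum_mul_sum]
    refine sum_congr rfl fun k _ => sum_congr rfl fun l _ => ?_
    rw [show -(j * (k - l)) = -(k * j) + -(-(l * j)) by ring, AddChar.map_add_eq_mul,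
      AddChar.map_neg_eq_conj _ (-(l * j))]
    simp only [smul_eq_mul, map_mul]
    ring
  apply ofReal_injective
  rw [ofReal_sum]
  simp_rw [expand]
  rw [sum_comm]
  push_cast
  rw [mul_sum]
  refine sum_congr rfl fun k _ => ?_
  rw [sum_comm]
  simp_rw [← sum_mul, sum_stdAddChar_neg_mul, sub_eq_zero,
    ite_mul, zero_mul, sum_ite_eq, mem_univ, if_true, mul_conj']

theorem norm_sum_prod_le (f : ZMod N → ℂ) {d : ℕ} (hd : 2 ≤ d) {B : ℝ} (hB : ∀ j, ‖𝓕 f j‖ ≤ B) :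
    ‖∑ a ∈ univ.filter (fun a : Fin d → ZMod N => ∑ r, a r = 0), ∏ r, f (a r)‖ ≤
      B ^ (d - 2) * ∑ k, ‖f k‖ ^ 2 := by
  have hN : (0 : ℝ) < N := by exact_mod_cast Nat.pos_of_ne_zero (NeZero.ne N)
  rw [sum_prod_eq_sum_dft_pow, norm_mul, norm_inv, norm_natCast]
  calc (N : ℝ)⁻¹ * ‖∑ j, 𝓕 f j ^ d‖ ≤ (N : ℝ)⁻¹ * (B ^ (d - 2) * ∑ j, ‖𝓕 f j‖ ^ 2) := by
        gcongr
        exact norm_sum_pow_le _ _ hd fun j _ => hB j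
    _ = B ^ (d - 2) * ∑ k, ‖f k‖ ^ 2 := by
        rw [sum_norm_dft_sq]
        field_simp

lemma dft_exp_mul_I (t : ZMod N → ℝ) (j : ZMod N) :
    𝓕 (fun k => exp (t k * I)) j =
      ∑ k : ZMod N, exp ((t k - 2 * π * j.val * ((k.val : ℝ) / N) : ℝ) * I) := by
  rw [dft_apply]
  refine sum_congr rfl fun k _ => ?_
  have hk : -(k * j) = ((-(k.val * j.val : ℤ) : ℤ) : ZMod N) := by
    push_cast [natCast_zmod_val]; rfl
  rw [hk, stdAddChar_coe, smul_eq_mul, ← Complex.exp_add]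
  congr 1
  push_cast
  ring

end ZMod

lemma Fintype.sum_sq_sub_mean_le {ι : Type*} [Fintype ι] (v : ι → ℝ) (c : ℝ) :
    ∑ k, (v k - (∑ l, v l) / Fintype.card ι) ^ 2 ≤ ∑ k, (v k - c) ^ 2 := by
  rcases isEmpty_or_nonempty ι with hι | hι
  · simp
  set m := (∑ l, v l) / Fintype.card ι
  have hsum : ∑ k, (v k - m) = 0 := by
    rw [sum_sub_distrib, sum_const, card_univ, nsmul_eq_mul, mul_div_cancel₀ _ (by positivity),
      sub_self]
  have split : ∑ k, (v k - c) ^ 2 =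
      ∑ k, (v k - m) ^ 2 + 2 * (m - c) * ∑ k, (v k - m) + Fintype.card ι * (m - c) ^ 2 := by
    have expand (k : ι) :
        (v k - c) ^ 2 = (v k - m) ^ 2 + 2 * (m - c) * (v k - m) + (m - c) ^ 2 := by
      ring
    simp only [expand, sum_add_distrib, ← mul_sum, sum_const, card_univ, nsmul_eq_mul]
  rw [split, hsum]
  nlinarith [sq_nonneg (m - c)]

lemma exists_norm_sum_exp_eq_sum_cos {ι : Type*} [Fintype ι] (u : ι → ℝ) :
    ∃ θ : ℝ, ‖∑ k, exp (u k * I)‖ = ∑ k, Real.cos (u k - θ) := by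
  set S := ∑ k, exp (u k * I)
  refine ⟨arg S, ?_⟩
  have h : (‖S‖ : ℂ) = ∑ k, exp ((u k - arg S : ℝ) * I) := by
    calc (‖S‖ : ℂ) = ‖S‖ * exp (arg S * I) * exp (-(arg S * I)) := by
          rw [mul_assoc, ← Complex.exp_add, add_neg_cancel, Complex.exp_zero, mul_one]
      _ = ∑ k, exp ((u k - arg S : ℝ) * I) := by
          rw [norm_mul_exp_arg_mul_I, sum_mul]
          refine sum_congr rfl fun k _ => ?_
          rw [← Complex.exp_add]
          push_cast
          ring_nf
  rw [← ofReal_re ‖S‖, h, re_sum]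
  simp_rw [exp_ofReal_mul_I_re]

lemma exists_abs_sub_two_pi_mul_int_le (x : ℝ) : ∃ m : ℤ, |x - 2 * π * m| ≤ π := by
  refine ⟨round (x / (2 * π)), ?_⟩
  have h := abs_sub_round (x / (2 * π))
  have h2π : 0 < 2 * π := by positivity
  calc |x - 2 * π * round (x / (2 * π))| = 2 * π * |x / (2 * π) - round (x / (2 * π))| := by
        rw [← abs_of_pos h2π, ← abs_mul, abs_of_pos h2π, mul_sub, mul_div_cancel₀ _ h2π.ne']
    _ ≤ 2 * π * (1 / 2) := by gcongr
    _ = π := by ring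

lemma sq_le_pi_sq_div_two_mul_one_sub_cos {x : ℝ} (hx : |x| ≤ π) :
    x ^ 2 ≤ π ^ 2 / 2 * (1 - Real.cos x) := by
  have h := Real.cos_le_one_sub_mul_cos_sq hx
  calc x ^ 2 = π ^ 2 / 2 * (2 / π ^ 2 * x ^ 2) := by field_simp
    _ ≤ π ^ 2 / 2 * (1 - Real.cos x) := by gcongr; linarith

theorem norm_sum_exp_le_of_forall_lt {ι : Type*} [Fintype ι] {δ : ℝ} (u : ι → ℝ)
    (h : ∀ m : ι → ℤ, δ < ∑ k, ((u k - 2 * π * m k) -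
      (∑ l, (u l - 2 * π * m l)) / Fintype.card ι) ^ 2) :
    ‖∑ k, exp (u k * I)‖ ≤ Fintype.card ι - 2 * δ / π ^ 2 := by
  obtain ⟨θ, hθ⟩ := exists_norm_sum_exp_eq_sum_cos u
  choose m hm using fun k => exists_abs_sub_two_pi_mul_int_le (u k - θ)
  have hcos (k : ι) : (u k - 2 * π * m k - θ) ^ 2 ≤ π ^ 2 / 2 * (1 - Real.cos (u k - θ)) := by
    calc (u k - 2 * π * m k - θ) ^ 2 = (u k - θ - 2 * π * m k) ^ 2 := by ring
      _ ≤ π ^ 2 / 2 * (1 - Real.cos (u k - θ - 2 * π * m k)) :=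
        sq_le_pi_sq_div_two_mul_one_sub_cos (hm k)
      _ = π ^ 2 / 2 * (1 - Real.cos (u k - θ)) := by
        rw [show 2 * π * (m k : ℝ) = m k * (2 * π) by ring, Real.cos_sub_int_mul_two_pi]
  have : δ < π ^ 2 / 2 * (Fintype.card ι - ‖∑ k, exp (u k * I)‖) :=
    calc δ < _ := h m
      _ ≤ ∑ k, (u k - 2 * π * m k - θ) ^ 2 := Fintype.sum_sq_sub_mean_le _ θ
      _ ≤ ∑ k, π ^ 2 / 2 * (1 - Real.cos (u k - θ)) := sum_le_sum fun k _ => hcos k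
      _ = _ := by rw [← mul_sum, sum_sub_distrib, hθ, sum_const, card_univ, nsmul_eq_mul, mul_one]
  rw [le_sub_iff_add_le, ← le_sub_iff_add_le', div_le_iff₀ (by positivity)]
  linarith

lemma ZMod.norm_dft_exp_mul_I_le {N : ℕ} [NeZero N] {δ : ℝ} (t : ZMod N → ℝ) (j : ZMod N)
    (h : ∀ m : ZMod N → ℤ, δ < ∑ k : ZMod N,
      ((t k - 2 * π * j.val * ((k.val : ℝ) / N) - 2 * π * m k) -
        (∑ l : ZMod N, (t l - 2 * π * j.val * ((l.val : ℝ) / N) - 2 * π * m l)) / N) ^ 2) :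
    ‖𝓕 (fun k => exp (t k * I)) j‖ ≤ N - 2 * δ / π ^ 2 := by
  rw [ZMod.dft_exp_mul_I]
  simpa only [ZMod.card] using
    norm_sum_exp_le_of_forall_lt (fun k => t k - 2 * π * j.val * ((k.val : ℝ) / N))
      fun m => by simpa only [ZMod.card] using h m

lemma sum_mul_Phi {R : Type*} [CommSemiring R] {d p : ℕ} [NeZero p] (t : ZMod p → R)
    (a : Fin d → ZMod p) : ∑ k, t k * (Phi a k : R) = ∑ r, t (a r) := by
  rw [← sum_fiberwise univ a (fun r => t (a r))]
  refine sum_congr rfl fun k _ => ?_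
  rw [sum_congr rfl fun r hr => congr_arg t (mem_filter.1 hr).2, sum_const, nsmul_eq_mul,
    mul_comm, Phi]

lemma norm_sum_exp_I_mul_sum_mul_Phi_le {N : ℕ} [NeZero N] (t : ZMod N → ℝ) {d : ℕ} (hd : 2 ≤ d)
    {B : ℝ} (hB : ∀ j, ‖𝓕 (fun k => exp (t k * I)) j‖ ≤ B) :
    ‖∑ a ∈ univ.filter (fun a : Fin d → ZMod N => ∑ r, a r = 0),
      exp (I * ∑ k, (t k : ℂ) * (Phi a k : ℂ))‖ ≤ B ^ (d - 2) * N := by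
  have hprod (a : Fin d → ZMod N) :
      exp (I * ∑ k, (t k : ℂ) * (Phi a k : ℂ)) = ∏ r, exp (t (a r) * I) := by
    rw [sum_mul_Phi, mul_sum, ← exp_sum]
    simp_rw [mul_comm I]
  simp_rw [hprod]
  simpa [norm_exp_ofReal_mul_I] using ZMod.norm_sum_prod_le _ hd hB

/-- Characteristic function bound: for `d ≥ 3` there is `δ₀ > 0` such that for all
`δ ∈ (0, δ₀)` there is `c(δ) > 0` with: for every prime `p` and every `t ∈ ℝ^p` whose
projection orthogonal to the all-ones vector stays at squared distance `> δ` from every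
point `2πj(0,1/p,…,(p-1)/p) + 2πm` (`j ∈ {0,…,p-1}`, `m ∈ ℤ^p`), one has
`|p^{-(d-1)} Σ_{a ∈ Z_{d,p}} e^{i⟨t, Φ(a)⟩}| ≤ 1 - c(δ)/p³`. -/
theorem characteristic_function_bound (d : ℕ) (hd : 3 ≤ d) :
    ∃ δ₀ : ℝ, 0 < δ₀ ∧ ∀ δ : ℝ, 0 < δ → δ < δ₀ → ∃ c : ℝ, 0 < c ∧
      ∀ (p : ℕ) [Fact p.Prime], ∀ t : ZMod p → ℝ,
        (∀ j : ℕ, j < p → ∀ m : ZMod p → ℤ,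
          δ < ∑ k : ZMod p,
            ((t k - 2 * Real.pi * j * ((k.val : ℝ) / p) - 2 * Real.pi * (m k)) -
              (∑ l : ZMod p,
                (t l - 2 * Real.pi * j * ((l.val : ℝ) / p) - 2 * Real.pi * (m l))) / p) ^ 2) →
        ‖(p : ℂ) ^ (-((d : ℤ) - 1)) *
            ∑ a ∈ Finset.univ.filter (fun a : Fin d → ZMod p => ∑ r, a r = 0),
              Complex.exp (Complex.I * (∑ k : ZMod p, (t k : ℂ) * (Phi a k : ℂ)))‖
          ≤ 1 - c / (p : ℝ) ^ 3 := by
  refine ⟨1, one_pos, fun δ hδ _ => ⟨2 * δ / π ^ 2, by positivity, fun p _ t ht => ?_⟩⟩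
  obtain ⟨e, rfl⟩ : ∃ e, d = e + 3 := ⟨d - 3, by omega⟩
  have hp : (1 : ℝ) ≤ p := by exact_mod_cast (Fact.out : p.Prime).one_le
  set ε := 2 * δ / π ^ 2 / p
  have hdft (j : ZMod p) : ‖𝓕 (fun k => exp (t k * I)) j‖ ≤ p * (1 - ε) :=
    (ZMod.norm_dft_exp_mul_I_le t j (ht j.val j.val_lt)).trans_eq (by simp only [ε]; field_simp)
  have hε : 0 ≤ 1 - ε :=
    nonneg_of_mul_nonneg_right ((norm_nonneg _).trans (hdft 0)) (by positivity)
  rw [norm_mul, norm_zpow, Complex.norm_natCast,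
    show -(((e + 3 : ℕ) : ℤ) - 1) = -((e + 2 : ℕ) : ℤ) by push_cast; ring, zpow_neg, zpow_natCast]
  calc ((p : ℝ) ^ (e + 2))⁻¹ * _ ≤ ((p : ℝ) ^ (e + 2))⁻¹ * ((p * (1 - ε)) ^ (e + 1) * p) := by
        gcongr
        exact norm_sum_exp_I_mul_sum_mul_Phi_le t (d := e + 3) (by omega) hdft
    _ = (1 - ε) ^ (e + 1) := by
        rw [mul_pow]
        field_simp
        ring
    _ ≤ 1 - ε := pow_le_of_le_one hε (sub_le_self _ (by positivity)) (by omega)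
    _ ≤ 1 - 2 * δ / π ^ 2 / p ^ 3 := by
        gcongr 1 - ?_
        exact div_le_div_of_nonneg_left (by positivity) (by positivity)
          (le_self_pow₀ hp (by norm_num))
end

section
/- Let d ≥ 3 be a fixed integer. There exists δ₀ > 0 such that for every δ ∈ (0, δ₀) there exists a constant c(δ) > 0 with the following property: for every prime p with gcd(p,d) = 1 and every vector 𝔫 = (𝔫_0,…,𝔫_{p−1}) ∈ ℝ^p with 𝔫_j ≥ 0 and Σ_j 𝔫_j = 1, if max_{0≤j≤p−1} |𝔫_j − 1/p| > δ/p and 𝔫_0 < 1 − δ/p, then, setting ε = δ/3, one has Σ ∏_{r=1}^{d−1} 𝔫_{a_r} ≥ c(δ)/p, where the sum runs over all (a_1,…,a_d) ∈ Z_{d,p} such that min_{1≤r≤d} 𝔫_{a_r} ≤ (1/(1+ε))·max_{1≤r≤d} 𝔫_{a_r}. -/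
open Finset
open scoped Classical

/-!
Let `M = 𝔫_u` be the maximal weight, `c = 1 + δ/3`, and `B = {x | M < c 𝔫_x}` the set of
near-maximal residues. A zero-sum tuple is `(b, -∑ b)` with `b` free, and it is unbalanced as soon
as two of its entries differ by a factor `c`. If `B` carries at most `9/10` of the mass, the
tuples `(u, x, *)` with `x ∉ B` already contribute `M (1 - 𝔫(B)) ≥ 1/(10p)`; the same family works
when `B = {0}`, since then `1 - 𝔫(B) = 1 - 𝔫_0 > δ/p`. Otherwise `𝔫` is concentrated, almost
uniformly, on `B`, so that `|B| ≈ 1/M` and `B₂ = {x | M < c² 𝔫_x}` satisfies `|B₂| ≤ 5|B|/4`, while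
`|B₂| < p` because `𝔫` is not close to uniform. By Cauchy–Davenport, a fixed proportion of the
tuples `b ∈ B^(d-1)` have `-∑ b ∉ B₂` (for `B = {w}`, `w ≠ 0`, this is where `gcd(p, d) = 1`
enters), and each of them is unbalanced of weight at least `(M/c)^(d-1)`.
-/

def IsUnbalanced {ι : Type*} [Fintype ι] (c : ℝ) (f : ι → ℝ) : Prop :=
  ⨅ i, f i ≤ 1 / c * ⨆ i, f i

lemma IsUnbalanced.of_mul_le {ι : Type*} [Fintype ι] {c : ℝ} {f : ι → ℝ} (hc : 0 < c) {i j : ι}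
    (h : c * f i ≤ f j) : IsUnbalanced c f := by
  have hj : f j ≤ ⨆ k, f k := le_ciSup (Finite.bddAbove_range f) j
  calc ⨅ k, f k ≤ f i := ciInf_le (Finite.bddBelow_range f) i
    _ ≤ 1 / c * f j := by rw [one_div_mul_eq_div, le_div_iff₀ hc, mul_comm]; exact h
    _ ≤ 1 / c * ⨆ k, f k := by gcongr

section ZeroSumTuples

variable {G : Type*} [AddCommGroup G] {m : ℕ}

def zeroSumCompletion (b : Fin m → G) : Fin (m + 1) → G :=
  Fin.snoc (α := fun _ => G) b (-∑ i, b i)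

@[simp] lemma zeroSumCompletion_castSucc (b : Fin m → G) (i : Fin m) :
    zeroSumCompletion b i.castSucc = b i := by
  simp [zeroSumCompletion]

@[simp] lemma zeroSumCompletion_last (b : Fin m → G) :
    zeroSumCompletion b (Fin.last m) = -∑ i, b i := by
  simp [zeroSumCompletion]

lemma sum_zeroSumCompletion (b : Fin m → G) : ∑ r, zeroSumCompletion b r = 0 := by
  simp [Fin.sum_univ_castSucc]

lemma zeroSumCompletion_init [Fintype G] {a : Fin (m + 1) → G} (ha : ∑ r, a r = 0) :
    zeroSumCompletion (Fin.init a) = a := by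
  ext r
  induction r using Fin.lastCases with
  | last =>
    rw [Fin.sum_univ_castSucc] at ha
    simp [Fin.init, neg_eq_of_add_eq_zero_right ha]
  | cast i => simp [Fin.init]

lemma sum_filter_sum_eq_zero [Fintype G] [DecidableEq G] {β : Type*} [AddCommMonoid β]
    (P : (Fin (m + 1) → G) → Prop) [DecidablePred P] (f : (Fin (m + 1) → G) → β) :
    ∑ a ∈ univ.filter (fun a => ∑ r, a r = 0 ∧ P a), f a =
      ∑ b ∈ univ.filter (fun b : Fin m → G => P (zeroSumCompletion b)),
        f (zeroSumCompletion b) := by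
  refine Finset.sum_nbij' Fin.init zeroSumCompletion ?_ ?_ ?_ ?_ ?_
  · intro a ha
    simp only [mem_filter, mem_univ, true_and] at ha ⊢
    rw [zeroSumCompletion_init ha.1]
    exact ha.2
  · intro b hb
    simp_all [sum_zeroSumCompletion]
  · intro a ha
    simp only [mem_filter, mem_univ, true_and] at ha
    exact zeroSumCompletion_init ha.1
  · intro b _
    ext i; simp [Fin.init]
  · intro a ha
    simp only [mem_filter, mem_univ, true_and] at ha
    rw [zeroSumCompletion_init ha.1]

lemma sum_filter_sum_eq_zero_prod [Fintype G] [DecidableEq G] {R : Type*} [CommSemiring R]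
    (n : G → R) (P : (Fin (m + 1) → G) → Prop) [DecidablePred P] :
    ∑ a ∈ univ.filter (fun a => ∑ r, a r = 0 ∧ P a),
        ∏ r ∈ univ.filter (fun r : Fin (m + 1) => (r : ℕ) < m), n (a r) =
      ∑ b ∈ univ.filter (fun b : Fin m → G => P (zeroSumCompletion b)), ∏ i, n (b i) := by
  rw [sum_filter_sum_eq_zero]
  refine sum_congr rfl fun b _ => ?_
  rw [Finset.prod_filter, Fin.prod_univ_castSucc]
  simp

end ZeroSumTuples

section UnbalancedFamilies

variable {G : Type*} [AddCommGroup G] [Fintype G] (n : G → ℝ) {c : ℝ}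

lemma mul_sum_light_le_sum_unbalanced (hn : ∀ x, 0 ≤ n x) (hc : 0 < c) (u : G) (k : ℕ) :
    n u * (∑ x ∈ univ.filter (fun x => c * n x ≤ n u), n x) * (∑ x, n x) ^ k ≤
      ∑ b ∈ univ.filter (fun b : Fin (k + 2) → G =>
        IsUnbalanced c (fun r => n (zeroSumCompletion b r))), ∏ i, n (b i) := by
  set L := univ.filter (fun x => c * n x ≤ n u)
  set t : Fin (k + 2) → Finset G := Fin.cons {u} (Fin.cons L fun _ => univ)
  have hsub : Fintype.piFinset t ⊆ univ.filter (fun b : Fin (k + 2) → G =>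
      IsUnbalanced c (fun r => n (zeroSumCompletion b r))) := by
    intro b hb
    rw [Fintype.mem_piFinset] at hb
    have h0 : b 0 = u := by simpa [t] using hb 0
    have h1 : c * n (b 1) ≤ n u := by simpa [t, L] using hb 1
    rw [mem_filter]
    refine ⟨mem_univ _, IsUnbalanced.of_mul_le hc (i := (1 : Fin (k + 2)).castSucc)
      (j := (0 : Fin (k + 2)).castSucc) ?_⟩
    rwa [zeroSumCompletion_castSucc, zeroSumCompletion_castSucc, h0]
  calc n u * (∑ x ∈ L, n x) * (∑ x, n x) ^ k = ∑ b ∈ Fintype.piFinset t, ∏ i, n (b i) := by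
        rw [← prod_univ_sum]
        simp [Fin.prod_univ_succ, t, mul_assoc]
    _ ≤ _ := sum_le_sum_of_subset_of_nonneg hsub fun b _ _ => prod_nonneg fun i _ => hn _

lemma card_mul_pow_le_sum_unbalanced [DecidableEq G] (hn : ∀ x, 0 ≤ n x) (hc : 0 < c)
    {t : ℝ} (ht : 0 ≤ t) {B W : Finset G} (hB : ∀ x ∈ B, t ≤ n x) (hW : ∀ x ∉ W, c * n x ≤ t)
    (k : ℕ) :
    #((Fintype.piFinset fun _ : Fin (k + 2) => B).filter (fun b => -∑ i, b i ∉ W)) * t ^ (k + 2) ≤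
      ∑ b ∈ univ.filter (fun b : Fin (k + 2) → G =>
        IsUnbalanced c (fun r => n (zeroSumCompletion b r))), ∏ i, n (b i) := by
  set S := (Fintype.piFinset fun _ : Fin (k + 2) => B).filter (fun b => -∑ i, b i ∉ W)
  have hsub : S ⊆ univ.filter (fun b : Fin (k + 2) → G =>
      IsUnbalanced c (fun r => n (zeroSumCompletion b r))) := by
    intro b hb
    simp only [S, mem_filter, Fintype.mem_piFinset] at hb
    rw [mem_filter]
    refine ⟨mem_univ _, IsUnbalanced.of_mul_le hc (i := Fin.last (k + 2))
      (j := (0 : Fin (k + 2)).castSucc) ?_⟩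
    rw [zeroSumCompletion_last, zeroSumCompletion_castSucc]
    exact (hW _ hb.2).trans (hB _ (hb.1 0))
  calc #S * t ^ (k + 2) = ∑ _b ∈ S, ∏ _i : Fin (k + 2), t := by simp
    _ ≤ ∑ b ∈ S, ∏ i, n (b i) :=
        sum_le_sum fun b hb => prod_le_prod (fun _ _ => ht) fun i _ =>
          hB _ (Fintype.mem_piFinset.mp (mem_filter.mp hb).1 i)
    _ ≤ _ := sum_le_sum_of_subset_of_nonneg hsub fun b _ _ => prod_nonneg fun i _ => hn _

end UnbalancedFamilies

lemma two_mul_card_le_card_filter_add_eq {G : Type*} [AddCommGroup G] [Fintype G]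
    [DecidableEq G] (B : Finset G) (s : G) :
    2 * #B ≤ #((B ×ˢ B).filter (fun xy => xy.1 + xy.2 = s)) + Fintype.card G := by
  set C := B.image (s - ·)
  have hC : #C = #B := card_image_of_injective _ sub_right_injective
  have hfiber : #((B ×ˢ B).filter (fun xy => xy.1 + xy.2 = s)) = #(B ∩ C) := by
    refine card_nbij' Prod.fst (fun x => (x, s - x)) ?_ ?_ ?_ ?_
    · rintro ⟨x, y⟩ h
      simp only [coe_filter, mem_product] at h
      obtain ⟨⟨hx, hy⟩, rfl⟩ := h
      simpa [C] using ⟨hx, y, hy, by abel⟩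
    · intro x h
      simp only [coe_inter, Set.mem_inter_iff, coe_image, Set.mem_image, mem_coe, C] at h
      obtain ⟨hx, y, hy, rfl⟩ := h
      simpa using ⟨hx, hy⟩
    · rintro ⟨x, y⟩ h
      simp only [coe_filter, mem_product] at h
      obtain ⟨-, rfl⟩ := h
      simp
    · intro x _
      rfl
  have := card_inter_add_card_union B C
  have := card_le_univ (B ∪ C)
  omega

section SumsInZModP

open scoped Pointwise

variable {p : ℕ} [Fact p.Prime]

lemma card_le_card_filter_add_notMem {B W : Finset (ZMod p)} (hB : 2 ≤ #B)
    (hWB : 4 * #W ≤ 5 * #B) (hWp : #W < p) :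
    #B ≤ 25 * #((B ×ˢ B).filter (fun xy => xy.1 + xy.2 ∉ W)) := by
  set P := (B ×ˢ B).filter (fun xy => xy.1 + xy.2 ∉ W)
  -- Small `B`: Cauchy–Davenport. Large `B`: every `s ∉ W` is a sum in at least `2|B| - p` ways.
  by_cases hsmall : 2 * #B ≤ p + 1
  · have hCD := ZMod.cauchy_davenport (Fact.out : p.Prime) (s := B) (t := B)
      (card_pos.mp (by omega)) (card_pos.mp (by omega))
    have hsums : (B + B) \ W = P.image (fun xy => xy.1 + xy.2) := by
      rw [← image_add_product, sdiff_eq_filter, filter_image]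
    have := (le_card_sdiff W (B + B)).trans (hsums ▸ card_image_le)
    omega
  · have hfib : ∀ s ∈ univ \ W, 2 * #B - p ≤ #(P.filter (fun xy => xy.1 + xy.2 = s)) := by
      intro s hs
      have := two_mul_card_le_card_filter_add_eq B s
      rw [ZMod.card] at this
      rw [filter_filter]
      convert Nat.sub_le_of_le_add this using 3 with xy
      exact and_iff_right_of_imp fun h => h ▸ (mem_sdiff.mp hs).2
    have hP : #P = ∑ s ∈ univ \ W, #(P.filter (fun xy => xy.1 + xy.2 = s)) :=
      card_eq_sum_card_fiberwise fun xy hxy => by simpa using (mem_filter.mp hxy).2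
    have hlower := card_nsmul_le_sum _ _ _ hfib
    rw [← hP, smul_eq_mul, card_sdiff_of_subset (subset_univ W), card_univ, ZMod.card] at hlower
    set x := p - #W
    set y := 2 * #B - p
    have : 3 * #B ≤ 4 * x + 4 * y := by omega
    have hx : 1 ≤ x := by omega
    have hy : 2 ≤ y := by omega
    nlinarith [Nat.mul_le_mul hx hy]

lemma card_pow_le_card_filter_sum_notMem {B : Finset (ZMod p)} (hB : 2 ≤ #B) (m : ℕ)
    {W : Finset (ZMod p)} (hWB : 4 * #W ≤ 5 * #B) (hWp : #W < p) :
    #B ^ (m + 1) ≤ 25 * #((Fintype.piFinset fun _ : Fin (m + 2) => B).filter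
      (fun b => ∑ i, b i ∉ W)) := by
  induction m generalizing W with
  | zero =>
    convert card_le_card_filter_add_notMem hB hWB hWp using 2
    · simp
    refine card_nbij' (fun b => (b 0, b 1)) (fun xy => ![xy.1, xy.2]) ?_ ?_ ?_ ?_
    · intro b hb
      simp_all [Fin.sum_univ_two]
    · rintro ⟨x, y⟩ h
      simp_all [Fin.sum_univ_two, Fin.forall_fin_two]
    · intro b _
      ext i; fin_cases i <;> rfl
    · intro xy _
      rfl
  | succ m ih =>
    set T := (Fintype.piFinset fun _ : Fin (m + 3) => B).filter (fun b => ∑ i, b i ∉ W)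
    have hT : #T = ∑ x ∈ B, #(T.filter (· 0 = x)) :=
      card_eq_sum_card_fiberwise fun b hb => Fintype.mem_piFinset.mp (mem_filter.mp hb).1 0
    have hfiber : ∀ x ∈ B, #(T.filter (· 0 = x)) =
        #((Fintype.piFinset fun _ : Fin (m + 2) => B).filter
          (fun c => ∑ i, c i ∉ W.map (Equiv.subRight x).toEmbedding)) := by
      intro x hx
      refine card_nbij' Fin.tail (Fin.cons (α := fun _ => ZMod p) x) ?_ ?_ ?_ ?_
      · intro b hb
        simp only [coe_filter, mem_filter, Fintype.mem_piFinset, T] at hb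
        obtain ⟨⟨hbB, hbW⟩, rfl⟩ := hb
        rw [Fin.sum_univ_succ] at hbW
        simp only [mem_coe, mem_filter, Fintype.mem_piFinset]
        exact ⟨fun i => hbB i.succ, by simpa [Fin.tail, add_comm] using hbW⟩
      · intro c hc
        simp only [mem_coe, mem_filter, Fintype.mem_piFinset] at hc
        simp only [mem_coe, mem_filter, Fintype.mem_piFinset, Fin.sum_cons, Fin.cons_zero,
          and_true, T]
        refine ⟨fun i => Fin.cases (by simpa using hx) (fun j => by simpa using hc.1 j) i, ?_⟩
        simpa [add_comm x] using hc.2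
      · intro b hb
        simp only [coe_filter, T] at hb
        exact hb.2 ▸ Fin.cons_self_tail b
      · intro c _
        exact Fin.tail_cons _ _
    calc #B ^ (m + 2) = ∑ _x ∈ B, #B ^ (m + 1) := by rw [sum_const, smul_eq_mul, pow_succ']
      _ ≤ ∑ x ∈ B, 25 * #((Fintype.piFinset fun _ : Fin (m + 2) => B).filter
          (fun c => ∑ i, c i ∉ W.map (Equiv.subRight x).toEmbedding)) :=
        sum_le_sum fun x _ => ih (by simpa using hWB) (by simpa using hWp)
      _ = 25 * #T := by rw [hT, mul_sum]; exact sum_congr rfl fun x hx => by rw [hfiber x hx]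

lemma card_pow_le_card_filter_neg_sum_notMem {k : ℕ} (hpk : Nat.Coprime p (k + 3))
    {B B₂ : Finset (ZMod p)} (hB : B.Nonempty) (hB0 : B ≠ {0})
    (hBB₂ : B ⊆ B₂) (hB₂B : 4 * #B₂ ≤ 5 * #B) (hB₂p : #B₂ < p) :
    #B ^ (k + 1) ≤ 25 * #((Fintype.piFinset fun _ : Fin (k + 2) => B).filter
      (fun b => -∑ i, b i ∉ B₂)) := by
  obtain hB2 | hB1 := le_or_gt 2 #B
  · simp_rw [← mem_neg']
    exact card_pow_le_card_filter_sum_notMem hB2 k (by rwa [card_neg]) (by rwa [card_neg])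
  obtain ⟨w, rfl⟩ : ∃ w, B = {w} := card_eq_one.mp (by have := hB.card_pos; omega)
  have hB₂ : B₂ = {w} :=
    (eq_of_subset_of_card_le hBB₂ (by simp only [card_singleton] at hB₂B ⊢; omega)).symm
  have hw : w ≠ 0 := fun h => hB0 (h ▸ rfl)
  have hk : ((k + 3 : ℕ) : ZMod p) ≠ 0 := by
    rw [Ne, ZMod.natCast_eq_zero_iff]
    exact fun h => (Fact.out : p.Prime).one_lt.ne' (hpk.eq_one_of_dvd h)
  have hconst : (fun _ => w) ∈ (Fintype.piFinset fun _ : Fin (k + 2) => {w}).filter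
      (fun b => -∑ i, b i ∉ B₂) := by
    simp only [mem_filter, Fintype.mem_piFinset, mem_singleton, hB₂, forall_const, true_and]
    intro h
    apply mul_ne_zero hk hw
    simp only [sum_const, card_univ, Fintype.card_fin, nsmul_eq_mul] at h
    push_cast at h ⊢
    linear_combination -h
  have := card_pos.mpr ⟨_, hconst⟩
  simp only [card_singleton, one_pow]
  omega

end SumsInZModP

section ProbabilityVectors

variable {α : Type*} [Fintype α] {n : α → ℝ} {u : α}

lemma one_div_card_le_of_forall_le [Nonempty α] (hsum : ∑ x, n x = 1) (hu : ∀ x, n x ≤ n u) :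
    1 / Fintype.card α ≤ n u := by
  obtain ⟨x, -, hx⟩ := exists_le_of_sum_le univ_nonempty
    (f := fun _ => 1 / (Fintype.card α : ℝ)) (g := n) (by simp [hsum])
  exact hx.trans (hu x)

lemma exists_mul_le_of_lt_abs_sub [Nonempty α] (hsum : ∑ x, n x = 1) (hu : ∀ x, n x ≤ n u) {δ : ℝ}
    (hδ : 0 ≤ δ) (hdev : ∃ j, δ / Fintype.card α < |n j - 1 / Fintype.card α|) :
    ∃ v, (1 + δ) * n v ≤ n u := by
  obtain ⟨j, hj⟩ := hdev
  have hN : (0 : ℝ) < Fintype.card α := Nat.cast_pos.mpr Fintype.card_pos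
  rcases lt_abs.mp hj with hj | hj
  · obtain ⟨v, -, hv⟩ := exists_le_of_sum_le univ_nonempty
      (f := n) (g := fun _ => 1 / (Fintype.card α : ℝ)) (by simp [hsum])
    refine ⟨v, ?_⟩
    have hju := hu j
    have hδv : δ * n v ≤ δ / Fintype.card α := by
      rw [div_eq_mul_one_div]; exact mul_le_mul_of_nonneg_left hv hδ
    linarith
  · refine ⟨j, ?_⟩
    have hMu := one_div_card_le_of_forall_le hsum hu
    have hj1 : (1 + δ) * n j ≤ (1 + δ) * ((1 - δ) / Fintype.card α) := by
      gcongr; rw [sub_div]; linarith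
    have hj2 : (1 + δ) * ((1 - δ) / Fintype.card α) ≤ 1 / Fintype.card α := by
      rw [mul_div_assoc', div_le_div_iff_of_pos_right hN]; nlinarith
    linarith

lemma four_mul_card_filter_le_five_mul_card_filter (hn : ∀ x, 0 ≤ n x) (hsum : ∑ x, n x = 1)
    (hu : ∀ x, n x ≤ n u) {c : ℝ} (hc : c ^ 2 ≤ 9 / 8)
    (hq : 9 / 10 < ∑ x ∈ univ.filter (fun x => n u < c * n x), n x) :
    4 * #(univ.filter (fun x => n u < c ^ 2 * n x)) ≤
      5 * #(univ.filter (fun x => n u < c * n x)) := by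
  set B := univ.filter (fun x => n u < c * n x)
  set B₂ := univ.filter (fun x => n u < c ^ 2 * n x)
  have hBM : 9 / 10 < #B * n u :=
    hq.trans_le (by simpa using sum_le_card_nsmul B n (n u) fun x _ => hu x)
  have hB₂M : #B₂ * n u ≤ c ^ 2 := by
    have h1 := card_nsmul_le_sum B₂ (fun x => c ^ 2 * n x) (n u) fun x hx => (mem_filter.mp hx).2.le
    have h2 : ∑ x ∈ B₂, n x ≤ 1 :=
      hsum ▸ sum_le_sum_of_subset_of_nonneg (subset_univ _) fun x _ _ => hn x
    rw [nsmul_eq_mul, ← mul_sum] at h1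
    nlinarith
  have hM : 0 < n u := by nlinarith [Nat.cast_nonneg (α := ℝ) #B]
  have : (4 * #B₂ : ℝ) < 5 * #B := lt_of_mul_lt_mul_right (by nlinarith) hM.le
  exact_mod_cast this.le

end ProbabilityVectors

section MainEstimate

variable {p : ℕ} [Fact p.Prime] {k : ℕ} {n : ZMod p → ℝ} {u : ZMod p} {c : ℝ}

lemma one_div_le_sum_unbalanced_of_concentrated (hpk : Nat.Coprime p (k + 3))
    (hn : ∀ x, 0 ≤ n x) (hsum : ∑ x, n x = 1) (hu : ∀ x, n x ≤ n u) (hc1 : 1 ≤ c)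
    (hc : c ^ 2 ≤ 9 / 8) (hq : 9 / 10 < ∑ x ∈ univ.filter (fun x => n u < c * n x), n x)
    (hB0 : univ.filter (fun x => n u < c * n x) ≠ {0}) (hv : ∃ v, c ^ 2 * n v ≤ n u) :
    1 / (25 * 2 ^ (k + 2) * p) ≤ ∑ b ∈ univ.filter (fun b : Fin (k + 2) → ZMod p =>
      IsUnbalanced c (fun r => n (zeroSumCompletion b r))), ∏ i, n (b i) := by
  set B := univ.filter (fun x => n u < c * n x)
  set B₂ := univ.filter (fun x => n u < c ^ 2 * n x)
  have hBB₂ : B ⊆ B₂ := fun x hx => by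
    simp only [B, B₂, mem_filter, mem_univ, true_and] at hx ⊢
    nlinarith [mul_nonneg (mul_nonneg (sub_nonneg.2 hc1) (zero_le_one.trans hc1)) (hn x)]
  have hB₂B := four_mul_card_filter_le_five_mul_card_filter hn hsum hu hc hq
  have hBM : 9 / 10 < #B * n u :=
    hq.trans_le (by simpa using sum_le_card_nsmul B n (n u) fun x _ => hu x)
  have hB₂p : #B₂ < p := by
    obtain ⟨v, hv⟩ := hv
    simpa using card_lt_univ_of_notMem (s := B₂) (x := v) (by simpa [B₂] using hv)
  have hB : B.Nonempty := nonempty_of_sum_ne_zero (hq.trans' (by norm_num)).ne'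
  have hcount := card_pow_le_card_filter_neg_sum_notMem hpk hB hB0 hBB₂ hB₂B hB₂p
  have hfamily := card_mul_pow_le_sum_unbalanced n hn (c := c) (by linarith) (t := n u / c)
    (div_nonneg (hn u) (by linarith)) (B := B) (W := B₂) (fun x hx => by
      rw [div_le_iff₀ (by linarith), mul_comm]; exact (mem_filter.mp hx).2.le)
    (fun x hx => by
      have : c ^ 2 * n x ≤ n u := by simpa [B₂] using hx
      rw [le_div_iff₀ (by linarith)]; linarith) k
  have hBp : (#B : ℝ) ≤ p := by exact_mod_cast (card_le_univ B).trans (ZMod.card p).le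
  have hB' : (#B : ℝ) ≠ 0 := Nat.cast_ne_zero.mpr hB.card_pos.ne'
  have ht : 1 / (2 * #B) ≤ n u / c := by
    rw [div_le_div_iff₀ (by positivity) (by linarith)]; nlinarith
  calc 1 / (25 * 2 ^ (k + 2) * p) ≤ 1 / (25 * 2 ^ (k + 2) * (#B : ℝ)) := by gcongr
    _ = (#B : ℝ) ^ (k + 1) / 25 * (1 / (2 * #B)) ^ (k + 2) := by
      rw [one_div_pow, mul_pow, pow_succ (#B : ℝ) (k + 1)]; field_simp
    _ ≤ #((Fintype.piFinset fun _ : Fin (k + 2) => B).filter (fun b => -∑ i, b i ∉ B₂)) *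
        (n u / c) ^ (k + 2) := by
      gcongr
      rw [div_le_iff₀ (by norm_num), mul_comm]; exact_mod_cast hcount
    _ ≤ _ := hfamily

lemma le_sum_unbalanced (hpk : Nat.Coprime p (k + 3)) (hn : ∀ x, 0 ≤ n x)
    (hsum : ∑ x, n x = 1) {δ : ℝ} (hδ : 0 < δ) (hδ₀ : δ ≤ 1 / 10)
    (hdev : ∃ j, δ / p < |n j - 1 / p|) (h0 : n 0 < 1 - δ / p) :
    δ / (25 * 2 ^ (k + 2)) / p ≤ ∑ b ∈ univ.filter (fun b : Fin (k + 2) → ZMod p =>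
      IsUnbalanced (1 + δ / 3) (fun r => n (zeroSumCompletion b r))), ∏ i, n (b i) := by
  obtain ⟨u, -, hu⟩ := exists_max_image univ n univ_nonempty
  replace hu : ∀ x, n x ≤ n u := fun x => hu x (mem_univ x)
  have hp : (0 : ℝ) < p := Nat.cast_pos.mpr (Fact.out : p.Prime).pos
  have hMp : 1 / p ≤ n u := by simpa using one_div_card_le_of_forall_le hsum hu
  set c := 1 + δ / 3
  set B := univ.filter (fun x => n u < c * n x)
  have hsplit : ∑ x ∈ B, n x + ∑ x ∈ univ.filter (fun x => c * n x ≤ n u), n x = 1 := by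
    simpa [B, not_lt] using
      (sum_filter_add_sum_filter_not univ (fun x => n u < c * n x) n).trans hsum
  have hlight := mul_sum_light_le_sum_unbalanced n hn (c := c) (by positivity) u k
  rw [hsum, one_pow, mul_one] at hlight
  have hδc : δ / (25 * 2 ^ (k + 2)) ≤ δ / 100 := by
    gcongr; linarith [pow_le_pow_right₀ (by norm_num : (1 : ℝ) ≤ 2) (show 2 ≤ k + 2 by omega)]
  by_cases hq : ∑ x ∈ B, n x ≤ 9 / 10
  · calc δ / (25 * 2 ^ (k + 2)) / p = 1 / p * (δ / (25 * 2 ^ (k + 2))) := by ring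
      _ ≤ n u * ∑ x ∈ univ.filter (fun x => c * n x ≤ n u), n x :=
        mul_le_mul hMp (by linarith) (by positivity) (hn u)
      _ ≤ _ := hlight
  by_cases hB0 : B = {0}
  · have hu0 : u = 0 := by
      have hM : 0 < n u := (by positivity : (0 : ℝ) < 1 / p).trans_le hMp
      have : u ∈ B := mem_filter.mpr ⟨mem_univ u, by simp only [c]; nlinarith⟩
      simpa [hB0] using this
    subst hu0
    rw [hB0, sum_singleton] at hsplit hq
    calc δ / (25 * 2 ^ (k + 2)) / p ≤ δ / 100 / p := by gcongr
      _ = 1 / 100 * (δ / p) := by ring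
      _ ≤ n 0 * ∑ x ∈ univ.filter (fun x => c * n x ≤ n 0), n x :=
        mul_le_mul (by linarith) (by linarith) (by positivity) (hn 0)
      _ ≤ _ := hlight
  have hc2 : c ^ 2 ≤ 1 + δ := by simp only [c]; nlinarith
  obtain ⟨v, hv⟩ := exists_mul_le_of_lt_abs_sub hsum hu hδ.le (by simpa using hdev)
  calc δ / (25 * 2 ^ (k + 2)) / p ≤ 1 / (25 * 2 ^ (k + 2) * p) := by
        rw [div_div]; gcongr; linarith
    _ ≤ _ := one_div_le_sum_unbalanced_of_concentrated hpk hn hsum hu (by simp only [c]; linarith)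
        (by linarith) (not_le.mp hq) hB0 ⟨v, (mul_le_mul_of_nonneg_right hc2 (hn v)).trans hv⟩

end MainEstimate

/-- For `d ≥ 3` there is `δ₀ > 0` such that for all `δ ∈ (0, δ₀)` there is `c(δ) > 0` with:
for every prime `p` with `gcd(p,d) = 1` and every probability vector `𝔫` on `{0,…,p-1}`,
if `max_j |𝔫_j - 1/p| > δ/p` and `𝔫_0 < 1 - δ/p`, then, with `ε = δ/3`,
`Σ ∏_{r=1}^{d-1} 𝔫_{a_r} ≥ c(δ)/p`, the sum over `(a_1,…,a_d) ∈ Z_{d,p}` with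
`min_r 𝔫_{a_r} ≤ (1/(1+ε)) max_r 𝔫_{a_r}`. -/
theorem unbalanced_tuple_sum_bound (d : ℕ) (hd : 3 ≤ d) :
    ∃ δ₀ : ℝ, 0 < δ₀ ∧ ∀ δ : ℝ, 0 < δ → δ < δ₀ → ∃ c : ℝ, 0 < c ∧
      ∀ (p : ℕ) [Fact p.Prime], Nat.gcd p d = 1 →
        ∀ 𝔫 : ZMod p → ℝ, (∀ j, 0 ≤ 𝔫 j) → (∑ j, 𝔫 j) = 1 →
        (∃ j, δ / p < |𝔫 j - 1 / p|) → 𝔫 0 < 1 - δ / p →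
        c / p ≤
          ∑ a ∈ Finset.univ.filter (fun a : Fin d → ZMod p =>
              (∑ r, a r = 0) ∧
              (⨅ r : Fin d, 𝔫 (a r)) ≤ (1 / (1 + δ / 3)) * ⨆ r : Fin d, 𝔫 (a r)),
            ∏ r ∈ Finset.univ.filter (fun r : Fin d => (r : ℕ) < d - 1), 𝔫 (a r) := by
  obtain ⟨k, rfl⟩ : ∃ k, d = k + 3 := ⟨d - 3, by omega⟩
  refine ⟨1 / 10, by norm_num, fun δ hδ hδ₀ => ⟨δ / (25 * 2 ^ (k + 2)), by positivity, ?_⟩⟩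
  intro p _ hpd n hn hsum hdev h0
  rw [show k + 3 - 1 = k + 2 from rfl, sum_filter_sum_eq_zero_prod]
  exact le_sum_unbalanced hpd hn hsum hδ hδ₀.le hdev h0
end

section
/- Let p ≥ 1 be an integer and let A be a p×p real symmetric matrix with Σ_{i,j=1}^{p} A_{ij} = 0. Then Σ_{i=1}^{p} ( Σ_{j=1}^{p} A_{ij} )² ≤ (p/2)·Σ_{i,j=1}^{p} A_{ij}²; equivalently, ‖A𝟙‖₂² ≤ (p/2)·‖A‖_F², where 𝟙 is the all-ones vector and ‖·‖_F is the Frobenius norm. -/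
open Finset

/-- Spectral estimate: if `A` is a real symmetric `p×p` matrix whose entries sum to zero,
then `‖A𝟙‖₂² ≤ (p/2)‖A‖_F²`, i.e. `Σ_i (Σ_j A_{ij})² ≤ (p/2) Σ_{i,j} A_{ij}²`. -/
theorem symm_matrix_row_sum_bound (p : ℕ) (hp : 1 ≤ p) (A : Matrix (Fin p) (Fin p) ℝ)
    (hsymm : A.IsSymm) (hsum : ∑ i : Fin p, ∑ j : Fin p, A i j = 0) :
    ∑ i : Fin p, (∑ j : Fin p, A i j) ^ 2
      ≤ ((p : ℝ) / 2) * ∑ i : Fin p, ∑ j : Fin p, (A i j) ^ 2 := by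
  set r : Fin p → ℝ := fun i => ∑ j, A i j with hr
  have hcol : ∀ j, ∑ i, A i j = r j := by
    intro j
    exact Finset.sum_congr rfl fun i _ => by rw [← hsymm.apply i j]
  set S : ℝ := ∑ i, r i ^ 2 with hS
  set T : ℝ := ∑ i, ∑ j, (A i j) ^ 2 with hT
  have hrsum : ∑ i, r i = 0 := hsum
  have hS0 : 0 ≤ S := Finset.sum_nonneg fun i _ => sq_nonneg _
  have hT0 : 0 ≤ T := Finset.sum_nonneg fun i _ =>
    Finset.sum_nonneg fun j _ => sq_nonneg _
  -- key identity: 2S = Σ_{i,j} A i j * (r i + r j)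
  have h1 : ∑ i, ∑ j, A i j * r i = S := by
    refine Finset.sum_congr rfl fun i _ => ?_
    rw [← Finset.sum_mul, sq]
  have h2 : ∑ i, ∑ j, A i j * r j = S := by
    rw [Finset.sum_comm]
    refine Finset.sum_congr rfl fun j _ => ?_
    rw [← Finset.sum_mul, hcol j, sq]
  have hkey : ∑ p : Fin p × Fin p, A p.1 p.2 * (r p.1 + r p.2) = 2 * S := by
    rw [Fintype.sum_prod_type]
    simp_rw [mul_add, Finset.sum_add_distrib]
    rw [h1, h2]; ring
  -- Cauchy-Schwarz
  have hcs := Finset.sum_mul_sq_le_sq_mul_sq (Finset.univ : Finset (Fin p × Fin p))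
    (fun q => A q.1 q.2) (fun q => r q.1 + r q.2)
  rw [hkey] at hcs
  have hA2 : ∑ q : Fin p × Fin p, (A q.1 q.2) ^ 2 = T := by
    rw [Fintype.sum_prod_type]
  have hr2 : ∑ q : Fin p × Fin p, (r q.1 + r q.2) ^ 2 = 2 * p * S := by
    rw [Fintype.sum_prod_type]
    have : ∀ i : Fin p, ∑ j, (r i + r j) ^ 2
        = (p : ℝ) * r i ^ 2 + 2 * r i * (∑ j, r j) + S := by
      intro i
      simp_rw [add_sq]
      rw [Finset.sum_add_distrib, Finset.sum_add_distrib, Finset.sum_const,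
        Finset.card_univ, Fintype.card_fin, ← Finset.mul_sum]
      push_cast; ring
    simp_rw [this, hrsum]
    rw [Finset.sum_add_distrib, Finset.sum_add_distrib, ← Finset.mul_sum,
      Finset.sum_const, Finset.card_univ, Fintype.card_fin]
    push_cast; simp; ring
  rw [hA2, hr2] at hcs
  -- hcs : (2*S)^2 ≤ T * (2*p*S)
  rcases eq_or_lt_of_le hS0 with h | h
  · rw [← h]
    exact mul_nonneg (by positivity) hT0
  · have h4 : (4 * S) * S ≤ ((2 : ℝ) * p * T) * S := by nlinarith [hcs]
    have h5 := le_of_mul_le_mul_right h4 h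
    linarith
end
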